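/- Let α > 0, 0 < q < 1, a > 0. If f is q-regular at zero and continuous in the sense of C(A*_{q,a}), then I^α_{q,0^+} f ∈ C(A*_{q,a}) and the sup-norm bound ‖I^α_{q,0^+} f‖ ≤ (a^α/Γ_q(α+1)) ‖f‖ holds. -/

import Mathlib

open Filter

noncomputable section

namespace QFrac

variable (q : ℝ)

/-- infinite q-shifted factorial `(z;q)_∞` -/
def pochInf (z : ℝ) : ℝ := ∏' n : ℕ, (1 - z * q ^ n)

/-- generalized q-shifted factorial `(z;q)_ν = (z;q)_∞ / (z q^ν;q)_∞` -/
def poch (z ν : ℝ) : ℝ := pochInf q z / pochInf q (z * q ^ ν)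

/-- finite q-shifted factorial `(z;q)_k` -/
def pochN (z : ℝ) (k : ℕ) : ℝ := ∏ i ∈ Finset.range k, (1 - z * q ^ i)

/-- q-Gamma function -/
def qGamma (α : ℝ) : ℝ := pochInf q q / pochInf q (q ^ α) * (1 - q) ^ (1 - α)

/-- Jackson q-integral `∫_0^a f(t) d_q t` -/
def jackson (a : ℝ) (f : ℝ → ℝ) : ℝ := (1 - q) * a * ∑' n : ℕ, q ^ n * f (a * q ^ n)

/-- Jackson q-integral `∫_c^b f(t) d_q t` -/
def jacksonI (c b : ℝ) (f : ℝ → ℝ) : ℝ := jackson q b f - jackson q c f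

/-- left-sided Riemann–Liouville q-fractional integral `I^α_{q,0^+}` -/
def Ileft (α : ℝ) (f : ℝ → ℝ) (x : ℝ) : ℝ :=
  x ^ (α - 1) / qGamma q α * jackson q x (fun t => poch q (q * t / x) (α - 1) * f t)

/-- right-sided Riemann–Liouville q-fractional integral `I^α_{q,b^-}` -/
def Iright (b α : ℝ) (f : ℝ → ℝ) (x : ℝ) : ℝ :=
  (qGamma q α)⁻¹ *
    jacksonI q (q * x) b (fun t => t ^ (α - 1) * poch q (q * x / t) (α - 1) * f t)

/-- Jackson q-derivative -/
def Dq (f : ℝ → ℝ) (x : ℝ) : ℝ := (f x - f (q * x)) / ((1 - q) * x)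

/-- Jackson `q⁻¹`-derivative -/
def Dqinv (f : ℝ → ℝ) (x : ℝ) : ℝ := (f x - f (x / q)) / ((1 - q⁻¹) * x)

/-- left-sided Caputo q-fractional derivative of order `α ∈ (0,1)` -/
def CDleft (α : ℝ) (f : ℝ → ℝ) : ℝ → ℝ := Ileft q (1 - α) (Dq q f)

/-- left-sided Riemann–Liouville q-fractional derivative of order `α ∈ (0,1)` -/
def DRLleft (α : ℝ) (f : ℝ → ℝ) : ℝ → ℝ := Dq q (Ileft q (1 - α) f)

/-- right-sided Riemann–Liouville q-fractional derivative of order `α ∈ (0,1)` -/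
def DRLright (b α : ℝ) (f : ℝ → ℝ) (x : ℝ) : ℝ :=
  (-1 / q) * Dqinv q (fun t => Iright q b (1 - α) f t) x

/-- right-sided Caputo q-fractional derivative of order `α ∈ (0,1)` -/
def CDright (b α : ℝ) (f : ℝ → ℝ) (x : ℝ) : ℝ :=
  (-1 / q) * Iright q b (1 - α) (Dqinv q f) x

/-- `f ∈ L¹_q(A^*_{q,a})` -/
def MemL1 (a : ℝ) (f : ℝ → ℝ) : Prop := Summable (fun n : ℕ => q ^ n * |f (a * q ^ n)|)

/-- `f ∈ L²_q(A^*_{q,a})` -/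
def MemL2 (a : ℝ) (f : ℝ → ℝ) : Prop := Summable (fun n : ℕ => q ^ n * (f (a * q ^ n)) ^ 2)

/-- the `L²_q` norm -/
def norm2 (a : ℝ) (f : ℝ → ℝ) : ℝ := Real.sqrt (jackson q a (fun t => (f t) ^ 2))

/-- `f` is q-regular at zero (its value at `0` is the limit along the q-grid) -/
def qRegular (a : ℝ) (f : ℝ → ℝ) : Prop :=
  Tendsto (fun n : ℕ => f (a * q ^ n)) atTop (nhds (f 0))

/-- the limit at zero along the q-grid exists -/
def qRegular' (a : ℝ) (f : ℝ → ℝ) : Prop :=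
  ∃ L : ℝ, Tendsto (fun n : ℕ => f (a * q ^ n)) atTop (nhds L)

/-- sup norm on `A^*_{q,a}` -/
def supNorm (a : ℝ) (f : ℝ → ℝ) : ℝ := max (⨆ n : ℕ, |f (a * q ^ n)|) |f 0|

/-- bounded q-variation part of q-absolute continuity -/
def qACvar (a : ℝ) (f : ℝ → ℝ) : Prop :=
  ∃ K : ℝ, ∀ m N : ℕ,
    ∑ j ∈ Finset.range N, |f (a * q ^ (m + j)) - f (a * q ^ (m + j + 1))| ≤ K

/-- q-absolute continuity on `A^*_{q,a}` -/
def qAC (a : ℝ) (f : ℝ → ℝ) : Prop := qRegular q a f ∧ qACvar q a f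

/-- little q-Jacobi polynomial `p_n(x; q^A, q^B | q)` -/
def littleJacobi (n : ℕ) (A B x : ℝ) : ℝ :=
  ∑ k ∈ Finset.range (n + 1),
    pochN q (q ^ (-(n : ℝ))) k * pochN q (q ^ (A + B + (n : ℝ) + 1)) k /
      (pochN q (q ^ (A + 1)) k * pochN q q k) * (q * x) ^ k

end QFrac

/-! On a grid point `x = a q^m`, `I^α f (x)` is a series in the values `f (x q^n)` against the
positive weights `q^n (q^{n+1};q)_∞ / (q^{n+α};q)_∞`, whose total mass `1 / (1 - q^α)` is found
by telescoping. Hence `|I^α f (x)| ≤ ‖f‖ · I^α 1 (x) = ‖f‖ x^α / Γ_q(α+1)`, which is at most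
`‖f‖ a^α / Γ_q(α+1)` and tends to `0 = I^α f (0)` as `m → ∞`. -/

namespace QFrac

open Topology

variable {q : ℝ}

lemma multipliable_one_sub_mul_pow (hq : |q| < 1) (z : ℝ) :
    Multipliable fun n : ℕ => 1 - z * q ^ n := by
  simpa only [← sub_eq_add_neg] using
    Real.multipliable_one_add_of_summable ((summable_geometric_of_abs_lt_one hq).mul_left z).neg

lemma pochInf_eq_one_sub_mul (hq : |q| < 1) (z : ℝ) :
    pochInf q z = (1 - z) * pochInf q (z * q) := by
  have hshift : Multipliable fun n : ℕ => 1 - z * q ^ (n + 1) := by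
    simpa only [pow_succ', ← mul_assoc] using multipliable_one_sub_mul_pow hq (z * q)
  rw [pochInf, pochInf, tprod_eq_zero_mul' (f := fun n => 1 - z * q ^ n) hshift, pow_zero, mul_one]
  exact congrArg _ (tprod_congr fun n => by ring)

lemma pochInf_one (hq : |q| < 1) : pochInf q 1 = 0 := by
  rw [pochInf_eq_one_sub_mul hq, sub_self, zero_mul]

lemma pochInf_pos (hq : |q| < 1) {z : ℝ} (hz : |z| < 1) : 0 < pochInf q z := by
  have hfactor : ∀ n : ℕ, 0 < 1 - z * q ^ n := fun n => by
    have : |z * q ^ n| ≤ |z| := by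
      rw [abs_mul, abs_pow]
      exact mul_le_of_le_one_right (abs_nonneg z) (pow_le_one₀ (abs_nonneg q) hq.le)
    linarith [le_abs_self (z * q ^ n)]
  have hlog : Summable fun n : ℕ => Real.log (1 - z * q ^ n) := by
    simpa only [← sub_eq_add_neg] using
      Real.summable_log_one_add_of_summable ((summable_geometric_of_abs_lt_one hq).mul_left z).neg
  rw [pochInf, ← Real.rexp_tsum_eq_tprod hfactor hlog]
  exact Real.exp_pos _

lemma abs_pochInf_sub_one_le (hq : |q| < 1) (z : ℝ) :
    |pochInf q z - 1| ≤ Real.exp (|z| / (1 - |q|)) - 1 := by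
  have hsum : HasSum (fun n : ℕ => ‖-(z * q ^ n)‖) (|z| / (1 - |q|)) := by
    simpa only [norm_neg, norm_mul, norm_pow, Real.norm_eq_abs, div_eq_mul_inv] using
      (hasSum_geometric_of_lt_one (abs_nonneg q) hq).mul_left |z|
  have hprod := (multipliable_one_sub_mul_pow hq z).hasProd.tendsto_prod_nat
  refine le_of_tendsto' ((hprod.sub_const 1).abs) fun n => ?_
  calc |∏ i ∈ Finset.range n, (1 - z * q ^ i) - 1|
      ≤ Real.exp (∑ i ∈ Finset.range n, ‖-(z * q ^ i)‖) - 1 := by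
        simpa only [← sub_eq_add_neg, Real.norm_eq_abs] using
          Finset.norm_prod_one_add_sub_one_le (Finset.range n) fun i => -(z * q ^ i)
    _ ≤ Real.exp (|z| / (1 - |q|)) - 1 := by
        gcongr
        exact sum_le_hasSum _ (fun i _ => norm_nonneg _) hsum

lemma tendsto_pochInf_nhds_zero (hq : |q| < 1) : Tendsto (pochInf q) (𝓝 0) (𝓝 1) := by
  have hbound : Tendsto (fun z : ℝ => Real.exp (|z| / (1 - |q|)) - 1) (𝓝 0) (𝓝 0) := by
    have : Continuous fun z : ℝ => Real.exp (|z| / (1 - |q|)) - 1 := by fun_prop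
    simpa using this.tendsto 0
  rw [tendsto_iff_norm_sub_tendsto_zero]
  exact squeeze_zero (fun _ => norm_nonneg _) (fun z => abs_pochInf_sub_one_le hq z) hbound

/-- The summand is `(1 - c)⁻¹` times the increment of `n ↦ (q^n;q)_∞ / (c q^n;q)_∞`, which
rises from `0` at `n = 0` to `1` at `n = ∞`. -/
lemma hasSum_pow_mul_pochInf_div (hq0 : 0 ≤ q) (hq1 : q < 1) {c : ℝ} (hc0 : 0 ≤ c)
    (hc1 : c < 1) :
    HasSum (fun n : ℕ => q ^ n * (pochInf q (q ^ (n + 1)) / pochInf q (q ^ n * c)))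
      (1 - c)⁻¹ := by
  have hq : |q| < 1 := abs_lt.2 ⟨by linarith, hq1⟩
  have hqnc : ∀ n : ℕ, |q ^ n * c| < 1 := fun n => by
    rw [abs_of_nonneg (by positivity)]
    exact (mul_le_of_le_one_left hc0 (pow_le_one₀ hq0 hq1.le)).trans_lt hc1
  set A : ℕ → ℝ := fun n => pochInf q (q ^ n) / pochInf q (q ^ n * c) with hA
  have hincr : ∀ n : ℕ, q ^ n * (pochInf q (q ^ (n + 1)) / pochInf q (q ^ n * c))
      = (A (n + 1) - A n) / (1 - c) := fun n => by
    have hv := (pochInf_pos hq (hqnc (n + 1))).ne'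
    have hw : 1 - q ^ n * c ≠ 0 := by linarith [le_abs_self (q ^ n * c), hqnc n]
    have hc : 1 - c ≠ 0 := by linarith
    simp only [hA]
    rw [pochInf_eq_one_sub_mul hq (q ^ n), pochInf_eq_one_sub_mul hq (q ^ n * c),
      ← pow_succ, mul_right_comm, ← pow_succ]
    field_simp
    ring
  have hA0 : A 0 = 0 := by simp only [hA, pow_zero, pochInf_one hq, zero_div]
  have hAlim : Tendsto A atTop (𝓝 1) := by
    have hpow := tendsto_pow_atTop_nhds_zero_of_lt_one hq0 hq1
    have h := ((tendsto_pochInf_nhds_zero hq).comp hpow).div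
      ((tendsto_pochInf_nhds_zero hq).comp (by simpa using hpow.mul_const c)) one_ne_zero
    rwa [div_one] at h
  have hnonneg : ∀ n : ℕ, 0 ≤ q ^ n * (pochInf q (q ^ (n + 1)) / pochInf q (q ^ n * c)) :=
    fun n => mul_nonneg (pow_nonneg hq0 n) (div_nonneg
      (pochInf_pos hq (by rw [abs_pow]; exact pow_lt_one₀ (abs_nonneg q) hq n.succ_ne_zero)).le
      (pochInf_pos hq (hqnc n)).le)
  rw [hasSum_iff_tendsto_nat_of_nonneg hnonneg]
  have hpartial : ∀ N : ℕ, ∑ n ∈ Finset.range N,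
      q ^ n * (pochInf q (q ^ (n + 1)) / pochInf q (q ^ n * c)) = A N / (1 - c) := fun N => by
    simp only [hincr, ← Finset.sum_div, Finset.sum_range_sub, hA0, sub_zero]
  simpa only [hpartial, inv_eq_one_div] using hAlim.div_const (1 - c)

lemma qGamma_pos (hq0 : 0 < q) (hq1 : q < 1) {α : ℝ} (hα : 0 < α) : 0 < qGamma q α := by
  have hq : |q| < 1 := abs_lt.2 ⟨by linarith, hq1⟩
  have hqα : |q ^ α| < 1 := by
    rw [abs_of_pos (Real.rpow_pos_of_pos hq0 α)]; exact Real.rpow_lt_one hq0.le hq1 hα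
  unfold qGamma
  have := pochInf_pos hq hq
  have := pochInf_pos hq hqα
  have : 0 < (1 - q) ^ (1 - α) := Real.rpow_pos_of_pos (by linarith) _
  positivity

lemma qGamma_add_one (hq0 : 0 < q) (hq1 : q < 1) {α : ℝ} (hα : α ≠ 0) :
    qGamma q (α + 1) = (1 - q ^ α) / (1 - q) * qGamma q α := by
  have hq : |q| < 1 := abs_lt.2 ⟨by linarith, hq1⟩
  have h1q : 1 - q ≠ 0 := by linarith
  have h1qα : 1 - q ^ α ≠ 0 := sub_ne_zero.2 fun h =>
    hα ((Real.rpow_right_inj hq0 hq1.ne).1 (h.symm.trans (Real.rpow_zero q).symm))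
  unfold qGamma
  rw [pochInf_eq_one_sub_mul hq (q ^ α), ← Real.rpow_add_one hq0.ne',
    show 1 - (α + 1) = (1 - α) - 1 by ring, Real.rpow_sub_one h1q]
  field_simp

lemma poch_pow_succ_sub_one (hq0 : 0 < q) (α : ℝ) (n : ℕ) :
    poch q (q ^ (n + 1)) (α - 1) = pochInf q (q ^ (n + 1)) / pochInf q (q ^ n * q ^ α) := by
  rw [poch, Real.rpow_sub_one hq0.ne', pow_succ, mul_assoc, mul_div_cancel₀ _ hq0.ne']

lemma poch_pow_succ_sub_one_pos (hq0 : 0 < q) (hq1 : q < 1) {α : ℝ} (hα : 0 < α) (n : ℕ) :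
    0 < poch q (q ^ (n + 1)) (α - 1) := by
  have hq : |q| < 1 := abs_lt.2 ⟨by linarith, hq1⟩
  have hqα : q ^ α < 1 := Real.rpow_lt_one hq0.le hq1 hα
  rw [poch_pow_succ_sub_one hq0]
  refine div_pos (pochInf_pos hq ?_) (pochInf_pos hq ?_)
  · rw [abs_pow]; exact pow_lt_one₀ (abs_nonneg q) hq n.succ_ne_zero
  · rw [abs_of_pos (by positivity)]
    exact (mul_le_of_le_one_left (by positivity) (pow_le_one₀ hq0.le hq1.le)).trans_lt hqα

lemma hasSum_pow_mul_poch (hq0 : 0 < q) (hq1 : q < 1) {α : ℝ} (hα : 0 < α) :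
    HasSum (fun n : ℕ => q ^ n * poch q (q ^ (n + 1)) (α - 1)) (1 - q ^ α)⁻¹ := by
  simpa only [poch_pow_succ_sub_one hq0] using
    hasSum_pow_mul_pochInf_div hq0.le hq1 (Real.rpow_nonneg hq0.le α)
      (Real.rpow_lt_one hq0.le hq1 hα)

lemma Ileft_eq_tsum (α : ℝ) (f : ℝ → ℝ) {x : ℝ} (hx : x ≠ 0) :
    Ileft q α f x = x ^ (α - 1) / qGamma q α *
      ((1 - q) * x * ∑' n : ℕ, q ^ n * poch q (q ^ (n + 1)) (α - 1) * f (x * q ^ n)) := by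
  rw [Ileft, jackson]
  congr 3 with n
  rw [show q * (x * q ^ n) / x = q ^ (n + 1) by field_simp; ring, mul_assoc]

lemma Ileft_zero (α : ℝ) (f : ℝ → ℝ) : Ileft q α f 0 = 0 := by
  simp [Ileft, jackson]

lemma Ileft_one (hq0 : 0 < q) (hq1 : q < 1) {α : ℝ} (hα : 0 < α) {x : ℝ} (hx : 0 < x) :
    Ileft q α (fun _ => 1) x = x ^ α / qGamma q (α + 1) := by
  have hΓ := (qGamma_pos hq0 hq1 hα).ne'
  have h1q : 1 - q ≠ 0 := by linarith
  have h1qα : 1 - q ^ α ≠ 0 := (sub_pos.2 (Real.rpow_lt_one hq0.le hq1 hα)).ne'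
  simp only [Ileft_eq_tsum α _ hx.ne', mul_one, (hasSum_pow_mul_poch hq0 hq1 hα).tsum_eq,
    qGamma_add_one hq0 hq1 hα.ne', Real.rpow_sub_one hx.ne']
  field_simp

lemma abs_Ileft_le_mul_Ileft_one (hq0 : 0 < q) (hq1 : q < 1) {α : ℝ} (hα : 0 < α) {x : ℝ}
    (hx : 0 < x) {f : ℝ → ℝ} {M : ℝ} (hf : ∀ n : ℕ, |f (x * q ^ n)| ≤ M) :
    |Ileft q α f x| ≤ M * Ileft q α (fun _ => 1) x := by
  have hsum := hasSum_pow_mul_poch hq0 hq1 hα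
  have hpre : 0 ≤ x ^ (α - 1) / qGamma q α :=
    div_nonneg (Real.rpow_nonneg hx.le _) (qGamma_pos hq0 hq1 hα).le
  have hlen : 0 ≤ (1 - q) * x := mul_nonneg (by linarith) hx.le
  simp only [Ileft_eq_tsum α _ hx.ne', mul_one, hsum.tsum_eq]
  rw [abs_mul, abs_of_nonneg hpre, abs_mul, abs_of_nonneg hlen, mul_left_comm M,
    mul_left_comm M]
  gcongr
  rw [← Real.norm_eq_abs]
  refine tsum_of_norm_bounded (hsum.mul_left M) fun n => ?_
  have hw : 0 ≤ q ^ n * poch q (q ^ (n + 1)) (α - 1) :=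
    mul_nonneg (pow_nonneg hq0.le n) (poch_pow_succ_sub_one_pos hq0 hq1 hα n).le
  rw [Real.norm_eq_abs, abs_mul, abs_of_nonneg hw, mul_comm M]
  exact mul_le_mul_of_nonneg_left (hf n) hw

lemma abs_le_supNorm {a : ℝ} {f : ℝ → ℝ} (hf : qRegular q a f) (n : ℕ) :
    |f (a * q ^ n)| ≤ supNorm q a f :=
  (le_ciSup hf.abs.bddAbove_range n).trans (le_max_left _ _)

lemma supNorm_nonneg (a : ℝ) (f : ℝ → ℝ) : 0 ≤ supNorm q a f :=
  (abs_nonneg _).trans (le_max_right _ _)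

lemma supNorm_le {a C : ℝ} {f : ℝ → ℝ} (h : ∀ n : ℕ, |f (a * q ^ n)| ≤ C) (h0 : |f 0| ≤ C) :
    supNorm q a f ≤ C :=
  max_le (ciSup_le h) h0

end QFrac

/-- boundedness of `I^α_{q,0^+}` on `C(A^*_{q,a})`. -/
theorem stmt9 (q a α : ℝ) (hq : 0 < q) (hq1 : q < 1) (ha : 0 < a) (hα : 0 < α)
    (f : ℝ → ℝ) (hf : QFrac.qRegular q a f) :
    QFrac.qRegular q a (QFrac.Ileft q α f) ∧
      QFrac.supNorm q a (QFrac.Ileft q α f) ≤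
        a ^ α / QFrac.qGamma q (α + 1) * QFrac.supNorm q a f := by
  open QFrac Topology in
  set M := supNorm q a f
  have hbound : ∀ m : ℕ, |Ileft q α f (a * q ^ m)| ≤ (a * q ^ m) ^ α / qGamma q (α + 1) * M := by
    intro m
    have hx : 0 < a * q ^ m := by positivity
    rw [← Ileft_one hq hq1 hα hx, mul_comm _ M]
    refine abs_Ileft_le_mul_Ileft_one hq hq1 hα hx fun n => ?_
    rw [mul_assoc, ← pow_add]
    exact abs_le_supNorm hf (m + n)
  have hΓ := qGamma_pos hq hq1 (by linarith : 0 < α + 1)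
  have hM : 0 ≤ M := supNorm_nonneg a f
  refine ⟨?_, supNorm_le (fun m => (hbound m).trans ?_) ?_⟩
  · have hgrid : Tendsto (fun m : ℕ => (a * q ^ m) ^ α) atTop (𝓝 0) := by
      simpa [Real.zero_rpow hα.ne'] using
        ((tendsto_pow_atTop_nhds_zero_of_lt_one hq.le hq1).const_mul a).rpow_const
          (Or.inr hα.le)
    rw [qRegular, Ileft_zero]
    refine squeeze_zero_norm hbound ?_
    simpa using (hgrid.div_const _).mul_const M
  · gcongr
    exact mul_le_of_le_one_right ha.le (pow_le_one₀ hq.le hq1.le)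
  · rw [Ileft_zero, abs_zero]
    exact mul_nonneg (div_nonneg (Real.rpow_nonneg ha.le α) hΓ.le) hM
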